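/- Let A ∈ (𝕊max)^{n×n}, let γ ∈ 𝕊max^∨ be an 𝕊max-eigenvalue of A (i.e. det(γ⊙I ⊖ A) ∇ 𝟘), and set B = γ⊙I ⊖ A. Then A ⊙ B^adj ∇ γ ⊙ B^adj, where ∇ holds entrywise between the two matrices. -/

import Mathlib

/-!
Common framework: the symmetrized tropical semiring 𝕊max over a linearly
ordered abelian group Γ, represented concretely: an element is either 𝟘
(represented by `none`) or a pair of a modulus `c : Γ` and a sign
(positive, negative or balanced), matching the classes of the quotient
𝕋max²/ℛ described in the paper.
-/

namespace TropPaper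

inductive SSign : Type
  | pos
  | neg
  | bal
  deriving DecidableEq

/-- The symmetrized tropical semiring 𝕊max(Γ): `none` is 𝟘, and
`some (c, s)` is the class of modulus `c` and sign `s`. -/
def Smax (Γ : Type) : Type := Option (Γ × SSign)

/-- Γ is divisible. -/
def DivisibleGrp (Γ : Type) [AddCommGroup Γ] : Prop :=
  ∀ k : ℕ, 0 < k → ∀ a : Γ, ∃ b : Γ, k • b = a

section Defs

variable {Γ : Type} [AddCommGroup Γ] [LinearOrder Γ] [IsOrderedAddMonoid Γ]

/-- 𝟘 -/
def szero : Smax Γ := none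

/-- 𝟙 -/
def sone : Smax Γ := some ((0 : Γ), SSign.pos)

/-- modulus |·| : 𝕊max → 𝕋max = WithBot Γ -/
def smod : Smax Γ → WithBot Γ
  | none => ⊥
  | some (c, _) => (c : WithBot Γ)

def sgnMul : SSign → SSign → SSign
  | SSign.pos, t => t
  | SSign.neg, SSign.pos => SSign.neg
  | SSign.neg, SSign.neg => SSign.pos
  | SSign.neg, SSign.bal => SSign.bal
  | SSign.bal, _ => SSign.bal

/-- ⊕ on 𝕊max -/
def sadd : Smax Γ → Smax Γ → Smax Γ
  | none, b => b
  | some a, none => some a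
  | some (c, s), some (d, t) =>
      if c < d then some (d, t)
      else if d < c then some (c, s)
      else some (c, if s = t then s else SSign.bal)

/-- ⊖ (unary) on 𝕊max -/
def sneg : Smax Γ → Smax Γ
  | none => none
  | some (c, SSign.pos) => some (c, SSign.neg)
  | some (c, SSign.neg) => some (c, SSign.pos)
  | some (c, SSign.bal) => some (c, SSign.bal)

/-- ⊙ on 𝕊max -/
def smul : Smax Γ → Smax Γ → Smax Γ
  | none, _ => none
  | some _, none => none
  | some (c, s), some (d, t) => some (c + d, sgnMul s t)

/-- a ⊖ b -/
def ssub (a b : Smax Γ) : Smax Γ := sadd a (sneg b)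

/-- a° = a ⊖ a -/
def sbal (a : Smax Γ) : Smax Γ := ssub a a

/-- the positive element with the same modulus (|·| seen inside 𝕊max⊕) -/
def sabs : Smax Γ → Smax Γ
  | none => none
  | some (c, _) => some (c, SSign.pos)

/-- multiplicative inverse (of invertible, i.e. signed nonzero, elements) -/
def sinv : Smax Γ → Smax Γ
  | none => none
  | some (c, s) => some (-c, s)

/-- a^{⊙k} -/
def spow (a : Smax Γ) : ℕ → Smax Γ
  | 0 => sone
  | k + 1 => smul a (spow a k)

/-- membership in 𝕊max° (balanced elements together with 𝟘) -/
def IsBal : Smax Γ → Prop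
  | none => True
  | some (_, s) => s = SSign.bal

/-- membership in 𝕊max⊕ (positive elements together with 𝟘) -/
def IsPos : Smax Γ → Prop
  | none => True
  | some (_, s) => s = SSign.pos

/-- membership in 𝕊max^∨ (signed elements) -/
def IsSigned : Smax Γ → Prop
  | none => True
  | some (_, s) => s ≠ SSign.bal

/-- the balance relation a ∇ b -/
def Balance (a b : Smax Γ) : Prop := IsBal (ssub a b)

/-- a ⪯ b -/
def natLe (a b : Smax Γ) : Prop := sadd a b = b

/-- a ≤ b :⟺ b ⊖ a ∈ 𝕊max⊕ ∪ 𝕊max° -/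
def sle (a b : Smax Γ) : Prop := IsPos (ssub b a) ∨ IsBal (ssub b a)

/-- a < b :⟺ b ⊖ a ∈ 𝕊max⊕ ∖ {𝟘} -/
def slt (a b : Smax Γ) : Prop := IsPos (ssub b a) ∧ ssub b a ≠ szero

/-- finite ⊕-sum over a list -/
def sumS {α : Type} (l : List α) (f : α → Smax Γ) : Smax Γ :=
  (l.map f).foldr sadd szero

/-- finite ⊙-product over a list -/
def prodS {α : Type} (l : List α) (f : α → Smax Γ) : Smax Γ :=
  (l.map f).foldr smul sone

/-- the zero vector -/
def zeroVecS {n : ℕ} : Fin n → Smax Γ := fun _ => szero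

def VecSigned {n : ℕ} (x : Fin n → Smax Γ) : Prop := ∀ i, IsSigned (x i)

def MatSigned {n : ℕ} (A : Matrix (Fin n) (Fin n) (Smax Γ)) : Prop :=
  ∀ i j, IsSigned (A i j)

def SymmS {n : ℕ} (A : Matrix (Fin n) (Fin n) (Smax Γ)) : Prop :=
  ∀ i j, A i j = A j i

/-- A ⊙ v -/
def matVecS {n : ℕ} (A : Matrix (Fin n) (Fin n) (Smax Γ)) (v : Fin n → Smax Γ) :
    Fin n → Smax Γ :=
  fun i => sumS (List.finRange n) fun j => smul (A i j) (v j)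

/-- A ⊙ B -/
def matMulS {n : ℕ} (A B : Matrix (Fin n) (Fin n) (Smax Γ)) :
    Matrix (Fin n) (Fin n) (Smax Γ) :=
  Matrix.of fun i j => sumS (List.finRange n) fun l => smul (A i l) (B l j)

/-- the identity matrix I -/
def idMatS {n : ℕ} : Matrix (Fin n) (Fin n) (Smax Γ) :=
  Matrix.of fun i j => if i = j then sone else szero

/-- xᵀ ⊙ A ⊙ x -/
def quadFormS {n : ℕ} (A : Matrix (Fin n) (Fin n) (Smax Γ)) (x : Fin n → Smax Γ) :
    Smax Γ :=
  sumS (List.finRange n) fun i => sumS (List.finRange n) fun j =>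
    smul (x i) (smul (A i j) (x j))

/-- tropical positive definiteness (the quadratic-form condition) -/
def TPD {n : ℕ} (A : Matrix (Fin n) (Fin n) (Smax Γ)) : Prop :=
  ∀ x : Fin n → Smax Γ, VecSigned x → x ≠ zeroVecS → slt szero (quadFormS A x)

/-- tropical positive semidefiniteness -/
def TPSD {n : ℕ} (A : Matrix (Fin n) (Fin n) (Smax Γ)) : Prop :=
  ∀ x : Fin n → Smax Γ, VecSigned x → x ≠ zeroVecS → sle szero (quadFormS A x)

/-- sgn(π) ∈ {𝟙, ⊖𝟙} -/
def permSignS {n : ℕ} (π : Equiv.Perm (Fin n)) : Smax Γ :=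
  if (Equiv.Perm.sign π : ℤ) = 1 then sone else sneg sone

/-- the determinant over 𝕊max -/
noncomputable def detS {n : ℕ} (M : Matrix (Fin n) (Fin n) (Smax Γ)) : Smax Γ :=
  sumS (Finset.univ : Finset (Equiv.Perm (Fin n))).toList fun π =>
    smul (permSignS π) (prodS (List.finRange n) fun i => M i (π i))

/-- the adjugate matrix over 𝕊max -/
noncomputable def adjS {n : ℕ} (M : Matrix (Fin (n+1)) (Fin (n+1)) (Smax Γ)) :
    Matrix (Fin (n+1)) (Fin (n+1)) (Smax Γ) :=
  Matrix.of fun i j =>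
    smul (spow (sneg sone) (i.val + j.val))
      (detS (Matrix.of fun a b : Fin n => M (Fin.succAbove j a) (Fin.succAbove i b)))

/-- γ ⊙ I ⊖ A -/
def charMatS {n : ℕ} (γ : Smax Γ) (A : Matrix (Fin n) (Fin n) (Smax Γ)) :
    Matrix (Fin n) (Fin n) (Smax Γ) :=
  Matrix.of fun i j => ssub (smul γ (idMatS i j)) (A i j)

/-- tr_k(A) = ⊕_{|K| = k} det(A[K,K]) -/
noncomputable def trkS {n : ℕ} (k : ℕ) (A : Matrix (Fin n) (Fin n) (Smax Γ)) : Smax Γ :=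
  sumS ((Finset.univ : Finset (Fin n)).powersetCard k).attach.toList fun K =>
    detS (Matrix.of fun a b : Fin k =>
      A (K.1.orderEmbOfFin (Finset.mem_powersetCard.mp K.2).2 a)
        (K.1.orderEmbOfFin (Finset.mem_powersetCard.mp K.2).2 b))

/-- matrix power A^{⊙k} -/
def matPowS {n : ℕ} (A : Matrix (Fin n) (Fin n) (Smax Γ)) :
    ℕ → Matrix (Fin n) (Fin n) (Smax Γ)
  | 0 => idMatS
  | k + 1 => matMulS A (matPowS A k)

/-- partial Kleene sums I ⊕ A ⊕ ⋯ ⊕ A^{⊙m} -/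
def starPartialS {n : ℕ} (A : Matrix (Fin n) (Fin n) (Smax Γ)) (m : ℕ) :
    Matrix (Fin n) (Fin n) (Smax Γ) :=
  Matrix.of fun i j => sumS (List.range (m+1)) fun k => matPowS A k i j

/-- the diagonal matrix D^(k) with diagonal (γ₁,…,γ_{k−1},𝟘,…,𝟘) (0-based k) -/
def DmatS {n : ℕ} (A : Matrix (Fin n) (Fin n) (Smax Γ)) (k : Fin n) :
    Matrix (Fin n) (Fin n) (Smax Γ) :=
  Matrix.of fun i j => if i = j ∧ i < k then A i i else szero

/-- the complementary matrix A^(k) -/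
def AmatS {n : ℕ} (A : Matrix (Fin n) (Fin n) (Smax Γ)) (k : Fin n) :
    Matrix (Fin n) (Fin n) (Smax Γ) :=
  Matrix.of fun i j => if i ≠ j ∨ k ≤ i then A i j else szero

/-- M = (γ⊙I ⊖ D^(k))^{⊙−1} ⊙ A^(k) -/
def MmatS {n : ℕ} (A : Matrix (Fin n) (Fin n) (Smax Γ)) (k : Fin n) :
    Matrix (Fin n) (Fin n) (Smax Γ) :=
  Matrix.of fun i j =>
    smul (sinv (if i < k then sneg (A i i) else A k k)) (AmatS A k i j)

/-- λ_k = (⊖𝟙)^{⊙(k−1)} ⊙ γ₁ ⊙ ⋯ ⊙ γ_{k−1} ⊙ γ^{⊙(n−k)} (0-based k, size n) -/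
def lamkS {n : ℕ} (A : Matrix (Fin n) (Fin n) (Smax Γ)) (k : Fin n) : Smax Γ :=
  smul (spow (sneg sone) k.val)
    (smul (prodS ((List.finRange n).filter (fun i => i < k)) fun i => A i i)
      (spow (A k k) (n - 1 - k.val)))

/-- irreducibility: the digraph of nonzero entries is strongly connected -/
def IrreducibleS {n : ℕ} (A : Matrix (Fin n) (Fin n) (Smax Γ)) : Prop :=
  ∀ i j : Fin n, Relation.ReflTransGen (fun a b => A a b ≠ szero) i j

/-- diagonal entries sorted non-increasingly for ⪯ -/
def DiagSortedS {n : ℕ} (A : Matrix (Fin n) (Fin n) (Smax Γ)) : Prop :=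
  ∀ i j : Fin n, i ≤ j → natLe (A j j) (A i i)

/-! 𝕋max-side notions (for the characteristic polynomial of |A|). -/

/-- finite max over a list in 𝕋max -/
def sumT {α : Type} (l : List α) (f : α → WithBot Γ) : WithBot Γ :=
  (l.map f).foldr max ⊥

/-- finite ⊙-product over a list in 𝕋max -/
def prodT {α : Type} (l : List α) (f : α → WithBot Γ) : WithBot Γ :=
  (l.map f).foldr (· + ·) (0 : WithBot Γ)

/-- the permanent over 𝕋max -/
noncomputable def perT {n : ℕ} (M : Matrix (Fin n) (Fin n) (WithBot Γ)) : WithBot Γ :=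
  sumT (Finset.univ : Finset (Equiv.Perm (Fin n))).toList fun π =>
    prodT (List.finRange n) fun i => M i (π i)

/-- coefficient of X^k in the 𝕋max-characteristic polynomial of B -/
noncomputable def charCoeffT {n : ℕ} (B : Matrix (Fin n) (Fin n) (WithBot Γ)) (k : ℕ) : WithBot Γ :=
  if k ≤ n then
    sumT ((Finset.univ : Finset (Fin n)).powersetCard (n - k)).attach.toList fun K =>
      perT (Matrix.of fun a b : Fin (n - k) =>
        B (K.1.orderEmbOfFin (Finset.mem_powersetCard.mp K.2).2 a)
          (K.1.orderEmbOfFin (Finset.mem_powersetCard.mp K.2).2 b))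
  else ⊥

/-- multiplicity of x as a 𝕋max-root of the formal polynomial of degree ≤ n
with coefficients Q: for x = ⊥ it is the lower degree, for x = c ∈ Γ it is the
difference between the largest and smallest exponents attaining
max_k (Q_k + k·c). -/
noncomputable def rootMultT (n : ℕ) (Q : ℕ → WithBot Γ) (x : WithBot Γ) : ℕ :=
  WithBot.recBotCoe
    (sInf {k | Q k ≠ ⊥})
    (fun c =>
      sSup {k | k ≤ n ∧ Q k + ((k • c : Γ) : WithBot Γ)
              = sumT (List.range (n+1)) (fun l => Q l + ((l • c : Γ) : WithBot Γ))}
        - sInf {k | k ≤ n ∧ Q k + ((k • c : Γ) : WithBot Γ)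
              = sumT (List.range (n+1)) (fun l => Q l + ((l • c : Γ) : WithBot Γ))})
    x

end Defs

/-- the signed valuation associated with a valuation v on an ordered field L -/
def svMap {Γ : Type} [AddCommGroup Γ] [LinearOrder Γ] [IsOrderedAddMonoid Γ] {L : Type} [Field L] [LinearOrder L] [IsStrictOrderedRing L]
    (v : L → WithBot Γ) (b : L) : Smax Γ :=
  if b = 0 then szero
  else if 0 < b then WithBot.recBotCoe szero (fun c => some (c, SSign.pos)) (v b)
  else WithBot.recBotCoe szero (fun c => some (c, SSign.neg)) (v b)

end TropPaper

/-
Laplace expansion along row j shows that the (i, j) entry of B ⊙ B^adj is the determinant of B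
with its row j replaced by row i. For i = j this is det B, balanced by assumption; for i ≠ j the
matrix has two equal rows, and swapping them shows that its determinant d satisfies d = ⊖d,
which forces d to be balanced. Finally B ⊙ B^adj = γ ⊙ B^adj ⊖ A ⊙ B^adj, so
A ⊙ B^adj ⊖ γ ⊙ B^adj = ⊖(B ⊙ B^adj) is balanced. The classical argument goes through because
𝕊max is a commutative semiring on which ⊖ is a distributive involution.
-/

namespace TropPaper

-- Lets `some (c, s)` and the `Option` API be used directly on elements of `Smax Γ`.
attribute [reducible] Smax

section Negation

variable {Γ : Type}

instance : Neg (Smax Γ) := ⟨sneg⟩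

lemma isBal_neg {a : Smax Γ} : IsBal (-a) ↔ IsBal a := by
  obtain _ | ⟨x, _ | _ | _⟩ := a <;> simp [Neg.neg, sneg, IsBal]

lemma isBal_of_eq_neg {a : Smax Γ} (h : a = -a) : IsBal a := by
  obtain _ | ⟨x, _ | _ | _⟩ := a <;> simp_all [Neg.neg, sneg, IsBal]

end Negation

section Addition

variable {Γ : Type} [LinearOrder Γ]

lemma sadd_none_right (a : Smax Γ) : sadd a none = a := by cases a <;> rfl

lemma sadd_of_lt {x y : Γ} {s t : SSign} (h : x < y) :
    sadd (some (x, s)) (some (y, t)) = some (y, t) := by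
  simp [sadd, h]

lemma sadd_of_gt {x y : Γ} {s t : SSign} (h : y < x) :
    sadd (some (x, s)) (some (y, t)) = some (x, s) := by
  simp [sadd, h, lt_asymm h]

lemma sadd_of_eq (x : Γ) (s t : SSign) :
    sadd (some (x, s)) (some (x, t)) = some (x, if s = t then s else SSign.bal) := by
  simp [sadd]

lemma sadd_comm (a b : Smax Γ) : sadd a b = sadd b a := by
  obtain _ | ⟨x, s⟩ := a <;> obtain _ | ⟨y, t⟩ := b
  · rfl
  · rfl
  · rfl
  · rcases lt_trichotomy x y with h | rfl | h
    · rw [sadd_of_lt h, sadd_of_gt h]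
    · rw [sadd_of_eq, sadd_of_eq]
      cases s <;> cases t <;> rfl
    · rw [sadd_of_gt h, sadd_of_lt h]

lemma sadd_assoc (a b c : Smax Γ) : sadd (sadd a b) c = sadd a (sadd b c) := by
  obtain _ | ⟨x, s⟩ := a
  · rfl
  obtain _ | ⟨y, t⟩ := b
  · rfl
  obtain _ | ⟨z, u⟩ := c
  · rw [sadd_none_right, sadd_none_right]
  rcases lt_trichotomy x y with hxy | rfl | hxy
  · rcases lt_trichotomy y z with hyz | rfl | hyz
    · simp only [sadd_of_lt hxy, sadd_of_lt hyz, sadd_of_lt (hxy.trans hyz)]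
    · simp only [sadd_of_lt hxy, sadd_of_eq]
    · simp only [sadd_of_lt hxy, sadd_of_gt hyz]
  · rcases lt_trichotomy x z with hxz | rfl | hxz
    · simp only [sadd_of_eq, sadd_of_lt hxz]
    · simp only [sadd_of_eq]
      cases s <;> cases t <;> cases u <;> rfl
    · simp only [sadd_of_eq, sadd_of_gt hxz]
  · rcases lt_trichotomy y z with hyz | rfl | hyz
    · rcases lt_trichotomy x z with hxz | rfl | hxz
      · simp only [sadd_of_gt hxy, sadd_of_lt hyz, sadd_of_lt hxz]
      · simp only [sadd_of_gt hxy, sadd_of_lt hyz, sadd_of_eq]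
      · simp only [sadd_of_gt hxy, sadd_of_lt hyz, sadd_of_gt hxz]
    · simp only [sadd_of_eq, sadd_of_gt hxy]
    · simp only [sadd_of_gt hxy, sadd_of_gt hyz, sadd_of_gt (hyz.trans hxy)]

instance : Add (Smax Γ) := ⟨sadd⟩

lemma ssub_eq_add_neg (a b : Smax Γ) : ssub a b = a + -b := rfl

end Addition

section Multiplication

variable {Γ : Type} [AddCommGroup Γ]

lemma smul_none_right (a : Smax Γ) : smul a none = none := by cases a <;> rfl

protected lemma smul_comm (a b : Smax Γ) : smul a b = smul b a := by
  obtain _ | ⟨x, s⟩ := a <;> obtain _ | ⟨y, t⟩ := b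
  all_goals first
    | rfl
    | (show some _ = some _; cases s <;> cases t <;> simp [sgnMul, add_comm])

protected lemma smul_assoc (a b c : Smax Γ) : smul (smul a b) c = smul a (smul b c) := by
  obtain _ | ⟨x, s⟩ := a <;> obtain _ | ⟨y, t⟩ := b <;> obtain _ | ⟨z, u⟩ := c
  all_goals first
    | rfl
    | (show some _ = some _; cases s <;> cases t <;> cases u <;> simp [sgnMul, add_assoc])

lemma sone_smul (a : Smax Γ) : smul sone a = a := by
  obtain _ | ⟨x, s⟩ := a
  · rfl
  · show some (0 + x, sgnMul SSign.pos s) = some (x, s)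
    rw [zero_add]; rfl

instance : Zero (Smax Γ) := ⟨szero⟩
instance : One (Smax Γ) := ⟨sone⟩
instance : Mul (Smax Γ) := ⟨smul⟩

instance : HasDistribNeg (Smax Γ) where
  neg_neg a := by obtain _ | ⟨x, _ | _ | _⟩ := a <;> rfl
  neg_mul a b := by
    obtain _ | ⟨x, _ | _ | _⟩ := a <;> obtain _ | ⟨y, _ | _ | _⟩ := b <;> rfl
  mul_neg a b := by
    obtain _ | ⟨x, _ | _ | _⟩ := a <;> obtain _ | ⟨y, _ | _ | _⟩ := b <;> rfl

end Multiplication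

section Semiring

variable {Γ : Type} [AddCommGroup Γ] [LinearOrder Γ] [IsOrderedAddMonoid Γ]

lemma smul_sadd (a b c : Smax Γ) : smul a (sadd b c) = sadd (smul a b) (smul a c) := by
  obtain _ | ⟨x, s⟩ := a
  · rfl
  obtain _ | ⟨y, t⟩ := b
  · rfl
  obtain _ | ⟨z, u⟩ := c
  · rw [sadd_none_right, smul_none_right, sadd_none_right]
  rcases lt_trichotomy y z with h | rfl | h
  · rw [sadd_of_lt h]
    exact (sadd_of_lt (by gcongr : x + y < x + z)).symm
  · simp only [sadd_of_eq]
    show some _ = sadd (some _) (some _)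
    rw [sadd_of_eq]
    cases s <;> cases t <;> cases u <;> rfl
  · rw [sadd_of_gt h]
    exact (sadd_of_gt (by gcongr : x + z < x + y)).symm

instance : CommSemiring (Smax Γ) where
  add_assoc := sadd_assoc
  zero_add _ := rfl
  add_zero := sadd_none_right
  add_comm := sadd_comm
  nsmul := nsmulRec
  mul_assoc := TropPaper.smul_assoc
  one_mul := sone_smul
  mul_one a := (TropPaper.smul_comm a sone).trans (sone_smul a)
  mul_comm := TropPaper.smul_comm
  left_distrib := smul_sadd
  right_distrib a b c := by
    show smul (sadd a b) c = sadd (smul a c) (smul b c)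
    rw [TropPaper.smul_comm _ c, smul_sadd, TropPaper.smul_comm c a, TropPaper.smul_comm c b]
  zero_mul _ := rfl
  mul_zero := smul_none_right
  npow := npowRec

protected lemma neg_add (a b : Smax Γ) : -(a + b) = -a + -b := by
  rw [← neg_one_mul, mul_add, neg_one_mul, neg_one_mul]

lemma balance_comm {a b : Smax Γ} : Balance a b ↔ Balance b a := by
  rw [Balance, Balance, ← isBal_neg, ssub_eq_add_neg, ssub_eq_add_neg, TropPaper.neg_add, neg_neg,
    add_comm]

end Semiring

section Determinant

variable {Γ : Type} [AddCommGroup Γ] [LinearOrder Γ] [IsOrderedAddMonoid Γ]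

def signHom : ℤˣ →* Smax Γ where
  toFun u := if u = 1 then 1 else -1
  map_one' := if_pos rfl
  map_mul' u v := by
    rcases Int.units_eq_one_or u with rfl | rfl <;> rcases Int.units_eq_one_or v with rfl | rfl <;>
      simp

lemma signHom_neg_one : signHom (-1) = (-1 : Smax Γ) := by simp [signHom]

lemma signHom_neg_one_pow (k : ℕ) : signHom ((-1) ^ k) = (-1 : Smax Γ) ^ k := by
  rw [map_pow, signHom_neg_one]

lemma sumS_toList {α : Type} (s : Finset α) (f : α → Smax Γ) :
    sumS s.toList f = ∑ x ∈ s, f x := by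
  rw [← Finset.sum_map_toList, List.sum_eq_foldr]; rfl

lemma sumS_finRange {n : ℕ} (f : Fin n → Smax Γ) : sumS (List.finRange n) f = ∑ i, f i := by
  rw [Fin.sum_univ_def, List.sum_eq_foldr]; rfl

lemma prodS_finRange {n : ℕ} (f : Fin n → Smax Γ) : prodS (List.finRange n) f = ∏ i, f i := by
  rw [Fin.prod_univ_def, List.prod_eq_foldr]; rfl

lemma detS_eq_sum {n : ℕ} (M : Matrix (Fin n) (Fin n) (Smax Γ)) :
    detS M = ∑ π : Equiv.Perm (Fin n), signHom (Equiv.Perm.sign π) * ∏ i, M i (π i) := by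
  rw [detS, sumS_toList]
  refine Finset.sum_congr rfl fun π _ => ?_
  rw [prodS_finRange, permSignS]
  congr 1
  rcases Int.units_eq_one_or (Equiv.Perm.sign π) with h | h <;> simp [h, signHom] <;> rfl

lemma detS_permute {n : ℕ} (σ : Equiv.Perm (Fin n))
    (M : Matrix (Fin n) (Fin n) (Smax Γ)) :
    detS (M.submatrix σ id) = signHom (Equiv.Perm.sign σ) * detS M := by
  rw [detS_eq_sum, detS_eq_sum, Finset.mul_sum,
    ← Equiv.sum_comp (Equiv.mulRight σ)]
  refine Finset.sum_congr rfl fun τ _ => ?_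
  simp only [Equiv.coe_mulRight, Matrix.submatrix_apply, id, Equiv.Perm.mul_apply,
    map_mul]
  rw [Equiv.prod_comp σ (fun x => M x (τ x))]
  ring

lemma detS_succ_row_zero {n : ℕ} (A : Matrix (Fin (n + 1)) (Fin (n + 1)) (Smax Γ)) :
    detS A = ∑ j : Fin (n + 1), (-1) ^ (j : ℕ) * A 0 j *
      detS (A.submatrix Fin.succ j.succAbove) := by
  rw [detS_eq_sum, Finset.univ_perm_fin_succ, ← Finset.univ_product_univ, Finset.sum_map,
    Finset.sum_product]
  refine Finset.sum_congr rfl fun p _ => ?_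
  rw [detS_eq_sum, Finset.mul_sum]
  simp only [Equiv.toEmbedding_apply, Equiv.Perm.decomposeFin.symm_sign, map_mul,
    Fin.prod_univ_succ, Equiv.Perm.decomposeFin_symm_apply_zero,
    Equiv.Perm.decomposeFin_symm_apply_succ, Matrix.submatrix_apply]
  cases p using Fin.cases with
  | zero =>
    refine Finset.sum_congr rfl fun σ _ => ?_
    simp only [if_pos, Equiv.swap_self, Equiv.refl_apply, Fin.succAbove_zero, map_one,
      Fin.val_zero, pow_zero]
    ring
  | succ i =>
    conv_rhs => rw [← Equiv.sum_comp (Equiv.mulLeft i.cycleRange)]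
    refine Finset.sum_congr rfl fun σ _ => ?_
    have hsign : (-1 : Smax Γ) ^ ((i : ℕ) + 1) * (-1) ^ (i : ℕ) = -1 := by
      rw [← pow_add]
      exact Odd.neg_one_pow ⟨i, by ring⟩
    simp only [Equiv.coe_mulLeft, Fin.sign_cycleRange, Fin.val_succ,
      Equiv.Perm.mul_apply, Fin.succAbove_cycleRange, if_neg (Fin.succ_ne_zero i), map_mul,
      signHom_neg_one_pow, signHom_neg_one]
    conv_lhs => rw [← hsign]
    ring

lemma detS_succ_row {n : ℕ} (A : Matrix (Fin (n + 1)) (Fin (n + 1)) (Smax Γ)) (i : Fin (n + 1)) :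
    detS A = ∑ j : Fin (n + 1), (-1) ^ ((i : ℕ) + j) * A i j *
      detS (A.submatrix i.succAbove j.succAbove) := by
  have hperm := detS_permute i.cycleRange.symm A
  rw [Equiv.Perm.sign_symm, Fin.sign_cycleRange, signHom_neg_one_pow] at hperm
  have hA : detS A = (-1) ^ (i : ℕ) * detS (A.submatrix i.cycleRange.symm id) := by
    rw [hperm, ← mul_assoc, ← pow_add, Even.neg_one_pow ⟨i, rfl⟩, one_mul]
  rw [hA, detS_succ_row_zero, Finset.mul_sum]
  refine Finset.sum_congr rfl fun j _ => ?_
  simp only [Matrix.submatrix_apply, id, Fin.cycleRange_symm_zero, Fin.cycleRange_symm_succ,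
    Matrix.submatrix_submatrix, Function.comp_def, pow_add]
  ring

lemma isBal_detS_of_row_eq {n : ℕ} (M : Matrix (Fin n) (Fin n) (Smax Γ)) {i j : Fin n}
    (hij : i ≠ j) (hrow : M i = M j) : IsBal (detS M) := by
  have hswap : M.submatrix (Equiv.swap i j) id = M := by
    ext a b
    rcases eq_or_ne a i with rfl | hai
    · simp [hrow]
    rcases eq_or_ne a j with rfl | haj
    · simp [hrow]
    · simp [Equiv.swap_apply_of_ne_of_ne hai haj]
  refine isBal_of_eq_neg ?_
  conv_lhs => rw [← hswap, detS_permute, Equiv.Perm.sign_swap hij]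
  simp [signHom]

end Determinant

section Adjugate

variable {Γ : Type} [AddCommGroup Γ] [LinearOrder Γ] [IsOrderedAddMonoid Γ]

lemma spow_eq_pow (a : Smax Γ) (k : ℕ) : spow a k = a ^ k := by
  induction k with
  | zero => rfl
  | succ k ih =>
    rw [spow, ih, pow_succ']
    rfl

lemma matMulS_eq_mul {n : ℕ} (A B : Matrix (Fin n) (Fin n) (Smax Γ)) : matMulS A B = A * B :=
  Matrix.ext fun i j => sumS_finRange fun l => A i l * B l j

lemma charMatS_eq {n : ℕ} (γ : Smax Γ) (A : Matrix (Fin n) (Fin n) (Smax Γ)) :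
    charMatS γ A = γ • (1 : Matrix (Fin n) (Fin n) (Smax Γ)) + (-1 : Smax Γ) • A := by
  refine Matrix.ext fun i j => ?_
  simp only [charMatS, idMatS, Matrix.of_apply, Matrix.add_apply, Matrix.smul_apply,
    Matrix.one_apply, smul_eq_mul, neg_one_mul]
  rfl

lemma charMatS_mul {n : ℕ} (γ : Smax Γ) (A N : Matrix (Fin n) (Fin n) (Smax Γ)) :
    charMatS γ A * N = γ • N + (-1 : Smax Γ) • (A * N) := by
  rw [charMatS_eq, Matrix.add_mul, Matrix.smul_mul, Matrix.smul_mul, Matrix.one_mul]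

lemma adjS_apply {n : ℕ} (M : Matrix (Fin (n + 1)) (Fin (n + 1)) (Smax Γ)) (i j : Fin (n + 1)) :
    adjS M i j = (-1) ^ ((i : ℕ) + j) * detS (M.submatrix j.succAbove i.succAbove) := by
  show smul (spow (sneg sone) _) _ = _
  rw [spow_eq_pow]
  rfl

lemma mul_adjS_apply {n : ℕ} (M : Matrix (Fin (n + 1)) (Fin (n + 1)) (Smax Γ))
    (i j : Fin (n + 1)) : (M * adjS M) i j = detS (M.updateRow j (M i)) := by
  rw [detS_succ_row _ j, Matrix.mul_apply]
  refine Finset.sum_congr rfl fun l _ => ?_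
  have hminor : (M.updateRow j (M i)).submatrix j.succAbove l.succAbove
      = M.submatrix j.succAbove l.succAbove := by
    ext a b
    simp
  rw [adjS_apply, hminor, Matrix.updateRow_self, add_comm (j : ℕ)]
  ring

lemma isBal_mul_adjS_apply {n : ℕ} {M : Matrix (Fin (n + 1)) (Fin (n + 1)) (Smax Γ)}
    (hM : IsBal (detS M)) (i j : Fin (n + 1)) : IsBal ((M * adjS M) i j) := by
  rw [mul_adjS_apply]
  rcases eq_or_ne i j with rfl | hij
  · rwa [Matrix.updateRow_eq_self]
  · exact isBal_detS_of_row_eq _ hij (by simp [Matrix.updateRow_ne hij])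

end Adjugate

theorem adjugate_balance_general {Γ : Type} [AddCommGroup Γ] [LinearOrder Γ] [IsOrderedAddMonoid Γ]
    {n : ℕ}
    (A : Matrix (Fin (n+1)) (Fin (n+1)) (Smax Γ)) (γ : Smax Γ)
    (heig : IsBal (detS (charMatS γ A))) :
    ∀ i j, Balance (matMulS A (adjS (charMatS γ A)) i j)
      (smul γ (adjS (charMatS γ A) i j)) := by
  intro i j
  have hbal := isBal_mul_adjS_apply heig i j
  rw [charMatS_mul] at hbal
  rwa [balance_comm, Balance, ssub_eq_add_neg, matMulS_eq_mul, ← neg_one_mul]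

/-- if γ is an 𝕊max-eigenvalue of A and B = γ⊙I ⊖ A, then
A ⊙ B^adj ∇ γ ⊙ B^adj entrywise. -/
theorem adjugate_balance {Γ : Type} [AddCommGroup Γ] [LinearOrder Γ] [IsOrderedAddMonoid Γ] [Nontrivial Γ]
    (hdiv : DivisibleGrp Γ) {n : ℕ}
    (A : Matrix (Fin (n+1)) (Fin (n+1)) (Smax Γ)) (γ : Smax Γ) (hγ : IsSigned γ)
    (heig : IsBal (detS (charMatS γ A))) :
    ∀ i j, Balance (matMulS A (adjS (charMatS γ A)) i j)
      (smul γ (adjS (charMatS γ A) i j)) :=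
  adjugate_balance_general A γ heig

end TropPaper
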